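/- For the ρdf⊥¬ graph G = {⟨a,⊥c,b⟩} (with a, b distinct URIs outside the ρdf⊥¬ vocabulary): G does not plainly ρdf-entail ⟨a,sc,¬b⟩, G does not plainly ρdf-derive ⟨a,sc,¬b⟩, and ⟨a,sc,¬b⟩ ∉ Cl(G); yet G ⊨⊥¬ ⟨a,sc,¬b⟩ and ⟨a,sc,¬b⟩ ∈ Cl⊥¬(G). -/
import Mathlib


/-!
Formalization of ρdf and ρdf⊥¬ (triple languages, semantics, deductive systems),
following Muñoz et al. and "Extending RDFS with negative statements".
-/

namespace Rho

/-- URI references: the ρdf⊥¬ vocabulary elements, atomic resources `res false n`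
together with their negations `res true n` (negation flips the Boolean, so ¬¬r = r),
and universal-quantification resources `star b n` = ★_{res b n}. -/
inductive URI : Type where
  | sp | sc | typ | dom | rng | botc | botp
  | res (b : Bool) (n : ℕ)
  | star (b : Bool) (n : ℕ)
deriving DecidableEq

/-- Terms: URIs, blank nodes and literals (pairwise disjoint alphabets). -/
inductive Term : Type where
  | uri (u : URI)
  | blank (n : ℕ)
  | lit (n : ℕ)
deriving DecidableEq

/-- The ρdf vocabulary {sp, sc, type, dom, range}. -/
def rhoVoc : Set URI := {URI.sp, URI.sc, URI.typ, URI.dom, URI.rng}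

/-- The ρdf⊥¬ vocabulary: ρdf plus ⊥c and ⊥p. -/
def botVoc : Set URI := rhoVoc ∪ {URI.botc, URI.botp}

def URI.isStar : URI → Prop
  | URI.star _ _ => True
  | _ => False

def Term.isStar : Term → Prop
  | Term.uri (URI.star _ _) => True
  | _ => False

def Term.isBlank : Term → Prop
  | Term.blank _ => True
  | _ => False

def Term.isLit : Term → Prop
  | Term.lit _ => True
  | _ => False

def Term.isVoc : Term → Prop
  | Term.uri u => u ∈ rhoVoc
  | _ => False

def Term.isBotVoc : Term → Prop
  | Term.uri u => u ∈ botVoc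
  | _ => False

/-- Negation of terms: flips the sign of an atomic/negated resource
(identity on all other terms, where negation is not defined). -/
def negT : Term → Term
  | Term.uri (URI.res b n) => Term.uri (URI.res (!b) n)
  | t => t

/-- An RDF triple ⟨s, p, o⟩ ∈ UBL × U × UBL. -/
structure Triple : Type where
  s : Term
  p : URI
  o : Term
deriving DecidableEq

/-- ρdf triple: subject and object are not in the ρdf vocabulary. -/
def Triple.okRdf (τ : Triple) : Prop := ¬ τ.s.isVoc ∧ ¬ τ.o.isVoc

/-- ρdf⊥¬ triple: s, o not in the ρdf⊥¬ vocabulary, p not of the form ★_c,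
s and o not both of the form ★_c, and if p is in the ρdf⊥¬ vocabulary then
neither s nor o is of the form ★_c. -/
def Triple.okN (τ : Triple) : Prop :=
  ¬ τ.s.isBotVoc ∧ ¬ τ.o.isBotVoc ∧ ¬ τ.p.isStar ∧ ¬ (τ.s.isStar ∧ τ.o.isStar) ∧
    (τ.p ∈ botVoc → ¬ τ.s.isStar ∧ ¬ τ.o.isStar)

/-- A graph is a finite set of triples. -/
abbrev Graph := Finset Triple

/-- A ρdf graph. -/
def IsRdfGraph (G : Graph) : Prop := ∀ τ ∈ G, τ.okRdf

/-- A ρdf⊥¬ graph. -/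
def IsNGraph (G : Graph) : Prop := ∀ τ ∈ G, τ.okN

/-- A ground graph contains no blank nodes. -/
def Ground (G : Graph) : Prop := ∀ τ ∈ G, ¬ τ.s.isBlank ∧ ¬ τ.o.isBlank

/-- No term of the form ★_c occurs in the graph. -/
def StarFree (G : Graph) : Prop := ∀ τ ∈ G, ¬ τ.s.isStar ∧ ¬ τ.o.isStar

/-- The universe of a graph: the set of terms occurring in its triples. -/
def uni (G : Graph) : Set Term := {t | ∃ τ ∈ G, t = τ.s ∨ t = Term.uri τ.p ∨ t = τ.o}

def rhoVocT : Set Term := Term.uri '' rhoVoc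
def botVocT : Set Term := Term.uri '' botVoc

/-- A map: a function on terms preserving URIs and literals. -/
def IsMap (μ : Term → Term) : Prop :=
  (∀ u, μ (Term.uri u) = Term.uri u) ∧ ∀ n, μ (Term.lit n) = Term.lit n

def mapT (μ : Term → Term) (τ : Triple) : Triple := ⟨μ τ.s, τ.p, μ τ.o⟩

def mapG (μ : Term → Term) (G : Graph) : Graph := G.image (mapT μ)

/-! ### ρdf semantics -/

/-- A ρdf interpretation (raw data, with carrier the type of terms; the
interpretation of literals is the identity, as in the paper). -/
structure Interp : Type where
  ΔR : Set Term
  ΔP : Set Term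
  ΔC : Set Term
  ΔL : Set Term
  extP : Term → Set (Term × Term)
  extC : Term → Set Term
  int : Term → Term

def Interp.iv (I : Interp) (e : URI) : Term := I.int (Term.uri e)

/-- `I` is a ρdf interpretation over the vocabulary `V`. -/
structure IsInterp (I : Interp) (V : Set Term) : Prop where
  finR : I.ΔR.Finite
  neR : I.ΔR.Nonempty
  finP : I.ΔP.Finite
  neP : I.ΔP.Nonempty
  finC : I.ΔC.Finite
  neC : I.ΔC.Nonempty
  finL : I.ΔL.Finite
  neL : I.ΔL.Nonempty
  hCR : I.ΔC ⊆ I.ΔR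
  hLR : I.ΔL ⊆ I.ΔR
  hlit : ∀ n, Term.lit n ∈ V → Term.lit n ∈ I.ΔL
  hextP : ∀ p ∈ I.ΔP, I.extP p ⊆ I.ΔR ×ˢ I.ΔR
  hextC : ∀ c ∈ I.ΔC, I.extC c ⊆ I.ΔR
  hint : ∀ t ∈ V, ¬ t.isBlank → I.int t ∈ I.ΔR ∪ I.ΔP
  hintlit : ∀ n, I.int (Term.lit n) = Term.lit n
  hintblank : ∀ n, I.int (Term.blank n) ∈ I.ΔR

/-- `I` is a model of the graph `G` (reflexive-relaxed ρdf semantics). -/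
structure Models (I : Interp) (G : Graph) : Prop where
  interp : IsInterp I (rhoVocT ∪ uni G)
  simple : ∀ τ ∈ G, I.iv τ.p ∈ I.ΔP ∧ (I.int τ.s, I.int τ.o) ∈ I.extP (I.iv τ.p)
  sp_trans : ∀ p q r, p ∈ I.ΔP → q ∈ I.ΔP → r ∈ I.ΔP →
    (p, q) ∈ I.extP (I.iv URI.sp) → (q, r) ∈ I.extP (I.iv URI.sp) →
    (p, r) ∈ I.extP (I.iv URI.sp)
  sp_sub : ∀ p q, (p, q) ∈ I.extP (I.iv URI.sp) →
    p ∈ I.ΔP ∧ q ∈ I.ΔP ∧ I.extP p ⊆ I.extP q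
  sc_trans : ∀ c d e, c ∈ I.ΔC → d ∈ I.ΔC → e ∈ I.ΔC →
    (c, d) ∈ I.extP (I.iv URI.sc) → (d, e) ∈ I.extP (I.iv URI.sc) →
    (c, e) ∈ I.extP (I.iv URI.sc)
  sc_sub : ∀ c d, (c, d) ∈ I.extP (I.iv URI.sc) →
    c ∈ I.ΔC ∧ d ∈ I.ΔC ∧ I.extC c ⊆ I.extC d
  typI1 : ∀ x c, c ∈ I.ΔC → (x ∈ I.extC c ↔ (x, c) ∈ I.extP (I.iv URI.typ))
  typI2 : ∀ p c x y, (p, c) ∈ I.extP (I.iv URI.dom) → (x, y) ∈ I.extP p → x ∈ I.extC c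
  typI3 : ∀ p c x y, (p, c) ∈ I.extP (I.iv URI.rng) → (x, y) ∈ I.extP p → y ∈ I.extC c
  typII1 : ∀ e ∈ rhoVoc, I.iv e ∈ I.ΔP
  typII2 : ∀ p c, (p, c) ∈ I.extP (I.iv URI.dom) → p ∈ I.ΔP ∧ c ∈ I.ΔC
  typII3 : ∀ p c, (p, c) ∈ I.extP (I.iv URI.rng) → p ∈ I.ΔP ∧ c ∈ I.ΔC
  typII4 : ∀ x c, (x, c) ∈ I.extP (I.iv URI.typ) → c ∈ I.ΔC

/-- ρdf entailment. -/
def Entails (G H : Graph) : Prop := ∀ I : Interp, Models I G → Models I H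

/-! ### The ρdf deductive system -/

/-- Instantiations of the ρdf deductive rules (2)-(5): premises / conclusion. -/
inductive RuleInst : Finset Triple → Triple → Prop where
  | sp_trans (a b c : Term) :
      RuleInst {⟨a, URI.sp, b⟩, ⟨b, URI.sp, c⟩} ⟨a, URI.sp, c⟩
  | sp_mono (d e : URI) (x y : Term) :
      RuleInst {⟨Term.uri d, URI.sp, Term.uri e⟩, ⟨x, d, y⟩} ⟨x, e, y⟩
  | sc_trans (a b c : Term) :
      RuleInst {⟨a, URI.sc, b⟩, ⟨b, URI.sc, c⟩} ⟨a, URI.sc, c⟩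
  | sc_mono (a b x : Term) :
      RuleInst {⟨a, URI.sc, b⟩, ⟨x, URI.typ, a⟩} ⟨x, URI.typ, b⟩
  | dom (d : URI) (b x y : Term) :
      RuleInst {⟨Term.uri d, URI.dom, b⟩, ⟨x, d, y⟩} ⟨x, URI.typ, b⟩
  | rng (d : URI) (b x y : Term) :
      RuleInst {⟨Term.uri d, URI.rng, b⟩, ⟨x, d, y⟩} ⟨y, URI.typ, b⟩
  | idom (a b x y : Term) (d : URI) :
      RuleInst {⟨a, URI.dom, b⟩, ⟨Term.uri d, URI.sp, a⟩, ⟨x, d, y⟩} ⟨x, URI.typ, b⟩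
  | irng (a b x y : Term) (d : URI) :
      RuleInst {⟨a, URI.rng, b⟩, ⟨Term.uri d, URI.sp, a⟩, ⟨x, d, y⟩} ⟨y, URI.typ, b⟩

/-- The ρdf rules without the implicit typing rules (5a), (5b). -/
inductive RuleInstCore : Finset Triple → Triple → Prop where
  | sp_trans (a b c : Term) :
      RuleInstCore {⟨a, URI.sp, b⟩, ⟨b, URI.sp, c⟩} ⟨a, URI.sp, c⟩
  | sp_mono (d e : URI) (x y : Term) :
      RuleInstCore {⟨Term.uri d, URI.sp, Term.uri e⟩, ⟨x, d, y⟩} ⟨x, e, y⟩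
  | sc_trans (a b c : Term) :
      RuleInstCore {⟨a, URI.sc, b⟩, ⟨b, URI.sc, c⟩} ⟨a, URI.sc, c⟩
  | sc_mono (a b x : Term) :
      RuleInstCore {⟨a, URI.sc, b⟩, ⟨x, URI.typ, a⟩} ⟨x, URI.typ, b⟩
  | dom (d : URI) (b x y : Term) :
      RuleInstCore {⟨Term.uri d, URI.dom, b⟩, ⟨x, d, y⟩} ⟨x, URI.typ, b⟩
  | rng (d : URI) (b x y : Term) :
      RuleInstCore {⟨Term.uri d, URI.rng, b⟩, ⟨x, d, y⟩} ⟨y, URI.typ, b⟩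

/-- The additional deductive rules of ρdf⊥¬. -/
inductive ExtraRule : Finset Triple → Triple → Prop where
  -- (2c)
  | sp_neg (a b : Bool) (m n : ℕ) :
      ExtraRule {⟨Term.uri (URI.res a m), URI.sp, Term.uri (URI.res b n)⟩}
        ⟨Term.uri (URI.res (!b) n), URI.sp, Term.uri (URI.res (!a) m)⟩
  -- (2d)
  | sp_star_o (x : Term) (d e : URI) (cb : Bool) (cn : ℕ) :
      ExtraRule {⟨x, d, Term.uri (URI.star cb cn)⟩, ⟨Term.uri d, URI.sp, Term.uri e⟩}
        ⟨x, e, Term.uri (URI.star cb cn)⟩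
  -- (2e)
  | sp_star_s (x : Term) (d e : URI) (cb : Bool) (cn : ℕ) :
      ExtraRule {⟨Term.uri (URI.star cb cn), d, x⟩, ⟨Term.uri d, URI.sp, Term.uri e⟩}
        ⟨Term.uri (URI.star cb cn), e, x⟩
  -- (3c)
  | sc_neg (a b : Bool) (m n : ℕ) :
      ExtraRule {⟨Term.uri (URI.res a m), URI.sc, Term.uri (URI.res b n)⟩}
        ⟨Term.uri (URI.res (!b) n), URI.sc, Term.uri (URI.res (!a) m)⟩
  -- (3d)
  | sc_star_o (a : Term) (d : URI) (bb cb : Bool) (bn cn : ℕ) :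
      ExtraRule {⟨a, d, Term.uri (URI.star cb cn)⟩,
                 ⟨Term.uri (URI.res bb bn), URI.sc, Term.uri (URI.res cb cn)⟩}
        ⟨a, d, Term.uri (URI.star bb bn)⟩
  -- (3e)
  | sc_star_s (a : Term) (d : URI) (bb cb : Bool) (bn cn : ℕ) :
      ExtraRule {⟨Term.uri (URI.star cb cn), d, a⟩,
                 ⟨Term.uri (URI.res bb bn), URI.sc, Term.uri (URI.res cb cn)⟩}
        ⟨Term.uri (URI.star bb bn), d, a⟩
  -- (4c)
  | dom_neg (db bb : Bool) (dn bn : ℕ) (x z y : Term) :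
      ExtraRule {⟨Term.uri (URI.res db dn), URI.dom, Term.uri (URI.res bb bn)⟩,
                 ⟨x, URI.typ, Term.uri (URI.res (!bb) bn)⟩,
                 ⟨z, URI.res db dn, y⟩}
        ⟨x, URI.res (!db) dn, y⟩
  -- (4d)
  | rng_neg (db bb : Bool) (dn bn : ℕ) (x z y : Term) :
      ExtraRule {⟨Term.uri (URI.res db dn), URI.rng, Term.uri (URI.res bb bn)⟩,
                 ⟨y, URI.typ, Term.uri (URI.res (!bb) bn)⟩,
                 ⟨x, URI.res db dn, z⟩}
        ⟨x, URI.res (!db) dn, y⟩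
  -- (4e)
  | star_inst_o (a y : Term) (d : URI) (cb : Bool) (cn : ℕ) :
      ExtraRule {⟨a, d, Term.uri (URI.star cb cn)⟩, ⟨y, URI.typ, Term.uri (URI.res cb cn)⟩}
        ⟨a, d, y⟩
  -- (4f)
  | star_inst_s (b x : Term) (d : URI) (cb : Bool) (cn : ℕ) :
      ExtraRule {⟨Term.uri (URI.star cb cn), d, b⟩, ⟨x, URI.typ, Term.uri (URI.res cb cn)⟩}
        ⟨x, d, b⟩
  -- (4g)
  | star_conflict_o (a y : Term) (db cb : Bool) (dn cn : ℕ) :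
      ExtraRule {⟨a, URI.res db dn, Term.uri (URI.star cb cn)⟩, ⟨a, URI.res (!db) dn, y⟩}
        ⟨y, URI.typ, Term.uri (URI.res (!cb) cn)⟩
  -- (4h)
  | star_conflict_s (b x : Term) (db cb : Bool) (dn cn : ℕ) :
      ExtraRule {⟨Term.uri (URI.star cb cn), URI.res db dn, b⟩, ⟨x, URI.res (!db) dn, b⟩}
        ⟨x, URI.typ, Term.uri (URI.res (!cb) cn)⟩
  -- (6a)
  | botc_symm (a b : Term) : ExtraRule {⟨a, URI.botc, b⟩} ⟨b, URI.botc, a⟩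
  -- (6b)
  | botc_subtrans (a b c : Term) :
      ExtraRule {⟨a, URI.botc, b⟩, ⟨c, URI.sc, a⟩} ⟨c, URI.botc, b⟩
  -- (6c)
  | botc_exh (a b : Term) : ExtraRule {⟨a, URI.botc, a⟩} ⟨a, URI.botc, b⟩
  -- (6d)
  | botc_sc (a : Term) (b : Bool) (n : ℕ) :
      ExtraRule {⟨a, URI.botc, Term.uri (URI.res b n)⟩} ⟨a, URI.sc, Term.uri (URI.res (!b) n)⟩
  -- (6e)
  | sc_botc (a : Term) (b : Bool) (n : ℕ) :
      ExtraRule {⟨a, URI.sc, Term.uri (URI.res b n)⟩} ⟨a, URI.botc, Term.uri (URI.res (!b) n)⟩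
  -- (7a)
  | botp_symm (a b : Term) : ExtraRule {⟨a, URI.botp, b⟩} ⟨b, URI.botp, a⟩
  -- (7b)
  | botp_subtrans (a b c : Term) :
      ExtraRule {⟨a, URI.botp, b⟩, ⟨c, URI.sp, a⟩} ⟨c, URI.botp, b⟩
  -- (7c)
  | botp_exh (a b : Term) : ExtraRule {⟨a, URI.botp, a⟩} ⟨a, URI.botp, b⟩
  -- (7d)
  | botp_sp (a : Term) (b : Bool) (n : ℕ) :
      ExtraRule {⟨a, URI.botp, Term.uri (URI.res b n)⟩} ⟨a, URI.sp, Term.uri (URI.res (!b) n)⟩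
  -- (7e)
  | sp_botp (a : Term) (b : Bool) (n : ℕ) :
      ExtraRule {⟨a, URI.sp, Term.uri (URI.res b n)⟩} ⟨a, URI.botp, Term.uri (URI.res (!b) n)⟩
  -- (8a)
  | cross_dom (a b c d : Term) :
      ExtraRule {⟨a, URI.dom, c⟩, ⟨b, URI.dom, d⟩, ⟨c, URI.botc, d⟩} ⟨a, URI.botp, b⟩
  -- (8b)
  | cross_rng (a b c d : Term) :
      ExtraRule {⟨a, URI.rng, c⟩, ⟨b, URI.rng, d⟩, ⟨c, URI.botc, d⟩} ⟨a, URI.botp, b⟩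

/-- All ρdf⊥¬ deductive rules: the ρdf rules plus the additional rules. -/
def RuleInstN (R : Finset Triple) (τ : Triple) : Prop := RuleInst R τ ∨ ExtraRule R τ

/-- The ρdf⊥¬ rules without the implicit typing rules (5a), (5b). -/
def RuleInstNCore (R : Finset Triple) (τ : Triple) : Prop := RuleInstCore R τ ∨ ExtraRule R τ

/-- One derivation step (including the map rule (1a)). -/
inductive Step (rules : Finset Triple → Triple → Prop) (ok : Triple → Prop) :
    Graph → Graph → Prop where
  | map {G G' : Graph} (μ : Term → Term) (hμ : IsMap μ) (h : mapG μ G' ⊆ G) :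
      Step rules ok G G'
  | sub {G G' : Graph} (h : G' ⊆ G) : Step rules ok G G'
  | rule {G : Graph} (R : Finset Triple) (τ : Triple)
      (hR : R ⊆ G) (hr : rules R τ) (hok : ok τ) : Step rules ok G (insert τ G)

/-- One derivation step without the map rule (1a). -/
inductive StepNM (rules : Finset Triple → Triple → Prop) (ok : Triple → Prop) :
    Graph → Graph → Prop where
  | sub {G G' : Graph} (h : G' ⊆ G) : StepNM rules ok G G'
  | rule {G : Graph} (R : Finset Triple) (τ : Triple)
      (hR : R ⊆ G) (hr : rules R τ) (hok : ok τ) : StepNM rules ok G (insert τ G)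

/-- Derivability (a proof is a finite sequence of graphs related by steps). -/
def Deriv (rules : Finset Triple → Triple → Prop) (ok : Triple → Prop) :
    Graph → Graph → Prop := Relation.ReflTransGen (Step rules ok)

/-- Derivability without the map rule (1a). -/
def DerivNM (rules : Finset Triple → Triple → Prop) (ok : Triple → Prop) :
    Graph → Graph → Prop := Relation.ReflTransGen (StepNM rules ok)

/-- The closure: all triples derivable without rule (1a). -/
def Closure (rules : Finset Triple → Triple → Prop) (ok : Triple → Prop) (G : Graph) :
    Set Triple := {τ | ∃ H : Graph, DerivNM rules ok G H ∧ τ ∈ H}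

/-- ρdf derivability `G ⊢ H`. -/
def DerivRdf : Graph → Graph → Prop := Deriv RuleInst Triple.okRdf

/-- ρdf closure `Cl(G)`. -/
def Cl : Graph → Set Triple := Closure RuleInst Triple.okRdf

/-- ρdf closure computed without the implicit typing rules (5). -/
def ClCore : Graph → Set Triple := Closure RuleInstCore Triple.okRdf

/-- ρdf⊥¬ derivability `G ⊢⊥¬ H`. -/
def DerivN : Graph → Graph → Prop := Deriv RuleInstN Triple.okN

/-- ρdf⊥¬ closure `Cl⊥¬(G)`. -/
def ClN : Graph → Set Triple := Closure RuleInstN Triple.okN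

/-- ρdf⊥¬ closure computed without the implicit typing rules (5). -/
def ClNCore : Graph → Set Triple := Closure RuleInstNCore Triple.okN

/-- `S` is closed under the given rules. -/
def ClosedUnder (rules : Finset Triple → Triple → Prop) (ok : Triple → Prop)
    (S : Set Triple) : Prop :=
  ∀ R τ, rules R τ → ok τ → ↑R ⊆ S → τ ∈ S

/-! ### ρdf⊥¬ semantics -/

/-- A ρdf⊥¬ interpretation (raw data). -/
structure InterpN : Type where
  ΔR : Set Term
  ΔP : Set Term
  ΔC : Set Term
  ΔL : Set Term
  compl : Term → Term
  extPp : Term → Set (Term × Term)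
  extPn : Term → Set (Term × Term)
  extCp : Term → Set Term
  extCn : Term → Set Term
  int : Term → Term

def InterpN.iv (I : InterpN) (e : URI) : Term := I.int (Term.uri e)

/-- `I` is a ρdf⊥¬ interpretation over the vocabulary `V`. -/
structure IsInterpN (I : InterpN) (V : Set Term) : Prop where
  finR : I.ΔR.Finite
  neR : I.ΔR.Nonempty
  finP : I.ΔP.Finite
  neP : I.ΔP.Nonempty
  finC : I.ΔC.Finite
  neC : I.ΔC.Nonempty
  finL : I.ΔL.Finite
  neL : I.ΔL.Nonempty
  hCR : I.ΔC ⊆ I.ΔR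
  hLR : I.ΔL ⊆ I.ΔR
  complR : ∀ t ∈ I.ΔR, I.compl t ∈ I.ΔR
  complP : ∀ t ∈ I.ΔP, I.compl t ∈ I.ΔP
  complC : ∀ t ∈ I.ΔC, I.compl t ∈ I.ΔC
  complInvol : ∀ t ∈ I.ΔR ∪ I.ΔP ∪ I.ΔC, I.compl (I.compl t) = t
  hlit : ∀ n, Term.lit n ∈ V → Term.lit n ∈ I.ΔL
  hPneg : ∀ p ∈ I.ΔP, I.extPp (I.compl p) = I.extPn p
  hCneg : ∀ c ∈ I.ΔC, I.extCp (I.compl c) = I.extCn c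
  hextPp : ∀ p ∈ I.ΔP, I.extPp p ⊆ I.ΔR ×ˢ I.ΔR
  hextPn : ∀ p ∈ I.ΔP, I.extPn p ⊆ I.ΔR ×ˢ I.ΔR
  hextCp : ∀ c ∈ I.ΔC, I.extCp c ⊆ I.ΔR
  hextCn : ∀ c ∈ I.ΔC, I.extCn c ⊆ I.ΔR
  hint : ∀ t ∈ V, ¬ t.isBlank → ¬ t.isStar → I.int t ∈ I.ΔR ∪ I.ΔP
  hintneg : ∀ (b : Bool) (n : ℕ),
    I.int (Term.uri (URI.res (!b) n)) = I.compl (I.int (Term.uri (URI.res b n)))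
  hintlit : ∀ n, I.int (Term.lit n) = Term.lit n
  hintblank : ∀ n, I.int (Term.blank n) ∈ I.ΔR

/-- `I` is a ρdf⊥¬-model of the graph `G`. -/
structure ModelsN (I : InterpN) (G : Graph) : Prop where
  interp : IsInterpN I (botVocT ∪ uni G)
  -- Simple
  simple1 : ∀ τ ∈ G, ¬ τ.s.isStar → ¬ τ.o.isStar →
    I.iv τ.p ∈ I.ΔP ∧ (I.int τ.s, I.int τ.o) ∈ I.extPp (I.iv τ.p)
  simple2 : ∀ τ ∈ G, ∀ (b : Bool) (n : ℕ), τ.o = Term.uri (URI.star b n) →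
    I.iv τ.p ∈ I.ΔP ∧ I.int (Term.uri (URI.res b n)) ∈ I.ΔC ∧
    ∀ y ∈ I.extCp (I.int (Term.uri (URI.res b n))), (I.int τ.s, y) ∈ I.extPp (I.iv τ.p)
  simple3 : ∀ τ ∈ G, ∀ (b : Bool) (n : ℕ), τ.s = Term.uri (URI.star b n) →
    I.iv τ.p ∈ I.ΔP ∧ I.int (Term.uri (URI.res b n)) ∈ I.ΔC ∧
    ∀ x ∈ I.extCp (I.int (Term.uri (URI.res b n))), (x, I.int τ.o) ∈ I.extPp (I.iv τ.p)
  simple4 : ∀ τ ∈ G, ∀ (b : Bool) (n : ℕ), τ.o = Term.uri (URI.star b n) →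
    I.iv τ.p ∈ I.ΔP ∧ I.int (Term.uri (URI.res b n)) ∈ I.ΔC ∧
    ∀ y, (I.int τ.s, y) ∈ I.extPn (I.iv τ.p) → y ∈ I.extCn (I.int (Term.uri (URI.res b n)))
  simple5 : ∀ τ ∈ G, ∀ (b : Bool) (n : ℕ), τ.s = Term.uri (URI.star b n) →
    I.iv τ.p ∈ I.ΔP ∧ I.int (Term.uri (URI.res b n)) ∈ I.ΔC ∧
    ∀ x, (x, I.int τ.o) ∈ I.extPn (I.iv τ.p) → x ∈ I.extCn (I.int (Term.uri (URI.res b n)))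
  -- Subproperty
  sp_trans : ∀ p q r, p ∈ I.ΔP → q ∈ I.ΔP → r ∈ I.ΔP →
    (p, q) ∈ I.extPp (I.iv URI.sp) → (q, r) ∈ I.extPp (I.iv URI.sp) →
    (p, r) ∈ I.extPp (I.iv URI.sp)
  sp_sub : ∀ p q, (p, q) ∈ I.extPp (I.iv URI.sp) →
    p ∈ I.ΔP ∧ q ∈ I.ΔP ∧ I.extPp p ⊆ I.extPp q
  sp_contra : ∀ p q, p ∈ I.ΔP → q ∈ I.ΔP →
    ((p, q) ∈ I.extPp (I.iv URI.sp) ↔ (I.compl q, I.compl p) ∈ I.extPp (I.iv URI.sp))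
  -- Subclass
  sc_trans : ∀ c d e, c ∈ I.ΔC → d ∈ I.ΔC → e ∈ I.ΔC →
    (c, d) ∈ I.extPp (I.iv URI.sc) → (d, e) ∈ I.extPp (I.iv URI.sc) →
    (c, e) ∈ I.extPp (I.iv URI.sc)
  sc_sub : ∀ c d, (c, d) ∈ I.extPp (I.iv URI.sc) →
    c ∈ I.ΔC ∧ d ∈ I.ΔC ∧ I.extCp c ⊆ I.extCp d
  sc_contra : ∀ c d, c ∈ I.ΔC → d ∈ I.ΔC →
    ((c, d) ∈ I.extPp (I.iv URI.sc) ↔ (I.compl d, I.compl c) ∈ I.extPp (I.iv URI.sc))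
  -- Typing I
  typI1 : ∀ x c, c ∈ I.ΔC → (x ∈ I.extCp c ↔ (x, c) ∈ I.extPp (I.iv URI.typ))
  typI2 : ∀ p c x y, (p, c) ∈ I.extPp (I.iv URI.dom) → (x, y) ∈ I.extPp p → x ∈ I.extCp c
  typI3 : ∀ p c x y, (p, c) ∈ I.extPp (I.iv URI.rng) → (x, y) ∈ I.extPp p → y ∈ I.extCp c
  typI4 : ∀ p c x y, (p, c) ∈ I.extPp (I.iv URI.dom) → x ∈ I.extCn c →
    (∃ x', (x', y) ∈ I.extPp p) → (x, y) ∈ I.extPn p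
  typI5 : ∀ p c x y, (p, c) ∈ I.extPp (I.iv URI.rng) → y ∈ I.extCn c →
    (∃ y', (x, y') ∈ I.extPp p) → (x, y) ∈ I.extPn p
  -- Typing II
  typII1 : ∀ e ∈ botVoc, I.iv e ∈ I.ΔP
  typII2 : ∀ p c, (p, c) ∈ I.extPp (I.iv URI.dom) → p ∈ I.ΔP ∧ c ∈ I.ΔC
  typII3 : ∀ p c, (p, c) ∈ I.extPp (I.iv URI.rng) → p ∈ I.ΔP ∧ c ∈ I.ΔC
  typII4 : ∀ x c, (x, c) ∈ I.extPp (I.iv URI.typ) → c ∈ I.ΔC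
  -- Disjointness I
  disjI1 : ∀ c d, (c, d) ∈ I.extPp (I.iv URI.botc) → c ∈ I.ΔC ∧ d ∈ I.ΔC
  disjI2 : ∀ p q, (p, q) ∈ I.extPp (I.iv URI.botp) → p ∈ I.ΔP ∧ q ∈ I.ΔP
  disjI3_symm : ∀ c d, (c, d) ∈ I.extPp (I.iv URI.botc) → (d, c) ∈ I.extPp (I.iv URI.botc)
  disjI3_subtrans : ∀ c d e, (c, d) ∈ I.extPp (I.iv URI.botc) →
    (e, c) ∈ I.extPp (I.iv URI.sc) → (e, d) ∈ I.extPp (I.iv URI.botc)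
  disjI3_exh : ∀ c d, (c, c) ∈ I.extPp (I.iv URI.botc) → d ∈ I.ΔC →
    (c, d) ∈ I.extPp (I.iv URI.botc)
  disjI4_symm : ∀ p q, (p, q) ∈ I.extPp (I.iv URI.botp) → (q, p) ∈ I.extPp (I.iv URI.botp)
  disjI4_subtrans : ∀ p q r, (p, q) ∈ I.extPp (I.iv URI.botp) →
    (r, p) ∈ I.extPp (I.iv URI.sp) → (r, q) ∈ I.extPp (I.iv URI.botp)
  disjI4_exh : ∀ p q, (p, p) ∈ I.extPp (I.iv URI.botp) → q ∈ I.ΔP →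
    (p, q) ∈ I.extPp (I.iv URI.botp)
  -- Disjointness II
  disjII1 : ∀ p q c d, (p, c) ∈ I.extPp (I.iv URI.dom) → (q, d) ∈ I.extPp (I.iv URI.dom) →
    (c, d) ∈ I.extPp (I.iv URI.botc) → (p, q) ∈ I.extPp (I.iv URI.botp)
  disjII2 : ∀ p q c d, (p, c) ∈ I.extPp (I.iv URI.rng) → (q, d) ∈ I.extPp (I.iv URI.rng) →
    (c, d) ∈ I.extPp (I.iv URI.botc) → (p, q) ∈ I.extPp (I.iv URI.botp)
  disjII3 : ∀ c d, c ∈ I.ΔC → d ∈ I.ΔC →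
    ((c, d) ∈ I.extPp (I.iv URI.botc) ↔ (c, I.compl d) ∈ I.extPp (I.iv URI.sc))
  disjII4 : ∀ p q, p ∈ I.ΔP → q ∈ I.ΔP →
    ((p, q) ∈ I.extPp (I.iv URI.botp) ↔ (p, I.compl q) ∈ I.extPp (I.iv URI.sp))

/-- ρdf⊥¬ entailment `G ⊨⊥¬ H`. -/
def EntailsN (G H : Graph) : Prop := ∀ I : InterpN, ModelsN I G → ModelsN I H

/-! ### The canonical model of a ρdf⊥¬ graph -/

def canDR (G : Graph) : Set Term := uni G ∪ negT '' uni G ∪ rhoVocT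

def canDP' (G : Graph) : Set Term :=
  {p | p ∈ uni G ∧ ∃ τ ∈ ClN G,
      Term.uri τ.p = p ∨
      ((τ.p = URI.sp ∨ τ.p = URI.botp) ∧ (τ.s = p ∨ τ.o = p)) ∨
      ((τ.p = URI.dom ∨ τ.p = URI.rng) ∧ τ.s = p)}
    ∪ botVocT

def canDP (G : Graph) : Set Term := canDP' G ∪ negT '' canDP' G

def canDC' (G : Graph) : Set Term :=
  {c | c ∈ uni G ∧ ∃ τ ∈ ClN G,
      (τ.p = URI.typ ∧ τ.o = c) ∨
      ((τ.p = URI.sc ∨ τ.p = URI.botc) ∧ (τ.s = c ∨ τ.o = c)) ∨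
      ((τ.p = URI.dom ∨ τ.p = URI.rng) ∧ τ.o = c) ∨
      (∃ (b : Bool) (n : ℕ),
        (τ.s = Term.uri (URI.star b n) ∨ τ.o = Term.uri (URI.star b n)) ∧
        c = Term.uri (URI.res b n))}

def canDC (G : Graph) : Set Term := canDC' G ∪ negT '' canDC' G

def canDL (G : Graph) : Set Term := {t | t ∈ uni G ∧ t.isLit}

def canExtP (G : Graph) (p : Term) : Set (Term × Term) :=
  {x | ∃ u : URI, p = Term.uri u ∧ (⟨x.1, u, x.2⟩ : Triple) ∈ ClN G}

def canExtC (G : Graph) (c : Term) : Set Term :=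
  {x | x ∈ uni G ∧ (⟨x, URI.typ, c⟩ : Triple) ∈ ClN G}

/-- The canonical interpretation `I_G` of a ρdf⊥¬ graph `G`. -/
def canInterp (G : Graph) : InterpN where
  ΔR := canDR G
  ΔP := canDP G
  ΔC := canDC G
  ΔL := canDL G
  compl := negT
  extPp := canExtP G
  extPn := fun p => canExtP G (negT p)
  extCp := canExtC G
  extCn := fun c => canExtC G (negT c)
  int := id

end Rho
namespace Rho

/-! ### Auxiliary lemmas for `botc_example` -/

/-- Counter-interpretation: models the ⊥c-triple but no sc-triple. -/
def ctrI (a b : Term) : Interp where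
  ΔR := {Term.uri URI.sp, Term.uri URI.sc, Term.uri URI.typ, Term.uri URI.dom,
    Term.uri URI.rng, Term.uri URI.botc, a, b, Term.lit 0}
  ΔP := {Term.uri URI.sp, Term.uri URI.sc, Term.uri URI.typ, Term.uri URI.dom,
    Term.uri URI.rng, Term.uri URI.botc}
  ΔC := {a}
  ΔL := {Term.lit 0}
  extP := fun p => if p = Term.uri URI.botc then {(a, b)} else ∅
  extC := fun _ => ∅
  int := fun t => match t with
    | Term.blank _ => a
    | t => t

lemma botc_inv_step {ok : Triple → Prop} {G G' : Graph}
    (h : Step RuleInst ok G G') (hG : ∀ τ ∈ G, τ.p = URI.botc) :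
    ∀ τ ∈ G', τ.p = URI.botc := by
  cases h with
  | map μ hμ hsub =>
      intro τ hτ
      have hm : mapT μ τ ∈ G := hsub (Finset.mem_image_of_mem _ hτ)
      simpa [mapT] using hG _ hm
  | sub hsub => exact fun τ hτ => hG _ (hsub hτ)
  | rule R τ hR hr hok =>
      intro σ hσ
      rcases Finset.mem_insert.mp hσ with rfl | hσ
      · exfalso
        cases hr <;>
          exact absurd (hG _ (hR (Finset.mem_insert_self _ _))) (by simp)
      · exact hG _ hσ

lemma botc_inv_stepNM {ok : Triple → Prop} {G G' : Graph}
    (h : StepNM RuleInst ok G G') (hG : ∀ τ ∈ G, τ.p = URI.botc) :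
    ∀ τ ∈ G', τ.p = URI.botc := by
  cases h with
  | sub hsub => exact fun τ hτ => hG _ (hsub hτ)
  | rule R τ hR hr hok =>
      intro σ hσ
      rcases Finset.mem_insert.mp hσ with rfl | hσ
      · exfalso
        cases hr <;>
          exact absurd (hG _ (hR (Finset.mem_insert_self _ _))) (by simp)
      · exact hG _ hσ

lemma botc_inv_deriv {ok : Triple → Prop} {G H : Graph}
    (h : Deriv RuleInst ok G H) (hG : ∀ τ ∈ G, τ.p = URI.botc) :
    ∀ τ ∈ H, τ.p = URI.botc := by
  induction h with
  | refl => exact hG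
  | tail _ hstep ih => exact botc_inv_step hstep ih

lemma botc_inv_derivNM {ok : Triple → Prop} {G H : Graph}
    (h : DerivNM RuleInst ok G H) (hG : ∀ τ ∈ G, τ.p = URI.botc) :
    ∀ τ ∈ H, τ.p = URI.botc := by
  induction h with
  | refl => exact hG
  | tail _ hstep ih => exact botc_inv_stepNM hstep ih


/-- For G = {⟨a,⊥c,b⟩} with a ≠ b: plainly, G neither entails nor derives
⟨a,sc,¬b⟩ and ⟨a,sc,¬b⟩ ∉ Cl(G); yet G ⊨⊥¬ ⟨a,sc,¬b⟩ and ⟨a,sc,¬b⟩ ∈ Cl⊥¬(G). -/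
theorem botc_example (ba bb : Bool) (na nb : ℕ)
    (hne : URI.res ba na ≠ URI.res bb nb) :
    ¬ Entails ({⟨Term.uri (URI.res ba na), URI.botc, Term.uri (URI.res bb nb)⟩} : Graph)
        {⟨Term.uri (URI.res ba na), URI.sc, Term.uri (URI.res (!bb) nb)⟩} ∧
    ¬ DerivRdf ({⟨Term.uri (URI.res ba na), URI.botc, Term.uri (URI.res bb nb)⟩} : Graph)
        {⟨Term.uri (URI.res ba na), URI.sc, Term.uri (URI.res (!bb) nb)⟩} ∧
    (⟨Term.uri (URI.res ba na), URI.sc, Term.uri (URI.res (!bb) nb)⟩ : Triple) ∉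
      Cl ({⟨Term.uri (URI.res ba na), URI.botc, Term.uri (URI.res bb nb)⟩} : Graph) ∧
    EntailsN ({⟨Term.uri (URI.res ba na), URI.botc, Term.uri (URI.res bb nb)⟩} : Graph)
        {⟨Term.uri (URI.res ba na), URI.sc, Term.uri (URI.res (!bb) nb)⟩} ∧
    (⟨Term.uri (URI.res ba na), URI.sc, Term.uri (URI.res (!bb) nb)⟩ : Triple) ∈
      ClN ({⟨Term.uri (URI.res ba na), URI.botc, Term.uri (URI.res bb nb)⟩} : Graph) := by
  refine ⟨?_, ?_, ?_, ?_, ?_⟩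
  · -- not plainly entailed
    intro hE
    have hMG : Models (ctrI (Term.uri (URI.res ba na)) (Term.uri (URI.res bb nb)))
        ({⟨Term.uri (URI.res ba na), URI.botc, Term.uri (URI.res bb nb)⟩} : Graph) := by
      refine { interp := ?_, simple := ?_, sp_trans := ?_, sp_sub := ?_, sc_trans := ?_,
               sc_sub := ?_, typI1 := ?_, typI2 := ?_, typI3 := ?_, typII1 := ?_,
               typII2 := ?_, typII3 := ?_, typII4 := ?_ }
      · refine { finR := ?_, neR := ?_, finP := ?_, neP := ?_, finC := ?_, neC := ?_,
                 finL := ?_, neL := ?_, hCR := ?_, hLR := ?_, hlit := ?_, hextP := ?_,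
                 hextC := ?_, hint := ?_, hintlit := ?_, hintblank := ?_ }
        · simp only [ctrI]
          repeat apply Set.Finite.insert
          exact Set.finite_singleton _
        · exact ⟨Term.lit 0, by simp [ctrI]⟩
        · simp only [ctrI]
          repeat apply Set.Finite.insert
          exact Set.finite_singleton _
        · exact ⟨Term.uri URI.sp, by simp [ctrI]⟩
        · exact Set.finite_singleton _
        · exact ⟨Term.uri (URI.res ba na), by simp [ctrI]⟩
        · exact Set.finite_singleton _
        · exact ⟨Term.lit 0, by simp [ctrI]⟩
        · intro x hx
          simp only [ctrI, Set.mem_singleton_iff] at hx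
          subst hx
          simp [ctrI]
        · intro x hx
          simp only [ctrI, Set.mem_singleton_iff] at hx
          subst hx
          simp [ctrI]
        · intro n hn
          exfalso
          simp [rhoVocT, rhoVoc, uni] at hn
        · intro p hp x hx
          simp only [ctrI] at hx
          split_ifs at hx with h
          · simp only [Set.mem_singleton_iff] at hx
            subst hx
            constructor <;> simp [ctrI]
          · exact absurd hx (Set.notMem_empty _)
        · intro c hc x hx
          exact absurd hx (Set.notMem_empty _)
        · intro t ht hb
          rcases ht with h | h
          · obtain ⟨u, hu, rfl⟩ := h
            left
            show Term.uri u ∈ (ctrI (Term.uri (URI.res ba na)) (Term.uri (URI.res bb nb))).ΔR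
            simp only [rhoVoc, Set.mem_insert_iff, Set.mem_singleton_iff] at hu
            rcases hu with rfl | rfl | rfl | rfl | rfl <;> simp [ctrI]
          · simp only [uni, Finset.mem_singleton, Set.mem_setOf_eq] at h
            obtain ⟨τ, rfl, h⟩ := h
            rcases h with rfl | rfl | rfl <;>
              · left
                simp [ctrI]
        · intro n
          rfl
        · intro n
          show Term.uri (URI.res ba na) ∈ _
          simp [ctrI]
      · intro τ hτ
        simp only [Finset.mem_singleton] at hτ
        subst hτ
        constructor
        · show Term.uri URI.botc ∈ _
          simp [ctrI]
        · show (Term.uri (URI.res ba na), Term.uri (URI.res bb nb)) ∈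
            (ctrI (Term.uri (URI.res ba na)) (Term.uri (URI.res bb nb))).extP
              (Term.uri URI.botc)
          simp [ctrI]
      · intro p q r _ _ _ h1 _
        exfalso
        have h1' : (p, q) ∈ (ctrI (Term.uri (URI.res ba na)) (Term.uri (URI.res bb nb))).extP
            (Term.uri URI.sp) := h1
        simp [ctrI] at h1'
      · intro p q h
        exfalso
        have h' : (p, q) ∈ (ctrI (Term.uri (URI.res ba na)) (Term.uri (URI.res bb nb))).extP
            (Term.uri URI.sp) := h
        simp [ctrI] at h'
      · intro c d e _ _ _ h1 _
        exfalso
        have h1' : (c, d) ∈ (ctrI (Term.uri (URI.res ba na)) (Term.uri (URI.res bb nb))).extP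
            (Term.uri URI.sc) := h1
        simp [ctrI] at h1'
      · intro c d h
        exfalso
        have h' : (c, d) ∈ (ctrI (Term.uri (URI.res ba na)) (Term.uri (URI.res bb nb))).extP
            (Term.uri URI.sc) := h
        simp [ctrI] at h'
      · intro x c hc
        constructor
        · intro hx
          exact absurd hx (Set.notMem_empty _)
        · intro hx
          exfalso
          have h' : (x, c) ∈ (ctrI (Term.uri (URI.res ba na)) (Term.uri (URI.res bb nb))).extP
              (Term.uri URI.typ) := hx
          simp [ctrI] at h'
      · intro p c x y h _
        exfalso
        have h' : (p, c) ∈ (ctrI (Term.uri (URI.res ba na)) (Term.uri (URI.res bb nb))).extP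
            (Term.uri URI.dom) := h
        simp [ctrI] at h'
      · intro p c x y h _
        exfalso
        have h' : (p, c) ∈ (ctrI (Term.uri (URI.res ba na)) (Term.uri (URI.res bb nb))).extP
            (Term.uri URI.rng) := h
        simp [ctrI] at h'
      · intro e he
        simp only [rhoVoc, Set.mem_insert_iff, Set.mem_singleton_iff] at he
        rcases he with rfl | rfl | rfl | rfl | rfl <;>
          · show Term.uri _ ∈ _
            simp [ctrI]
      · intro p c h
        exfalso
        have h' : (p, c) ∈ (ctrI (Term.uri (URI.res ba na)) (Term.uri (URI.res bb nb))).extP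
            (Term.uri URI.dom) := h
        simp [ctrI] at h'
      · intro p c h
        exfalso
        have h' : (p, c) ∈ (ctrI (Term.uri (URI.res ba na)) (Term.uri (URI.res bb nb))).extP
            (Term.uri URI.rng) := h
        simp [ctrI] at h'
      · intro x c h
        exfalso
        have h' : (x, c) ∈ (ctrI (Term.uri (URI.res ba na)) (Term.uri (URI.res bb nb))).extP
            (Term.uri URI.typ) := h
        simp [ctrI] at h'
    have hMH := hE _ hMG
    have hs := hMH.simple _ (Finset.mem_singleton_self _)
    have h2 : (Term.uri (URI.res ba na), Term.uri (URI.res (!bb) nb)) ∈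
        (ctrI (Term.uri (URI.res ba na)) (Term.uri (URI.res bb nb))).extP
          (Term.uri URI.sc) := hs.2
    simp [ctrI] at h2
  · -- not plainly derivable
    intro hD
    have hinv := botc_inv_deriv hD (by
      intro τ hτ
      simp only [Finset.mem_singleton] at hτ
      subst hτ
      rfl)
    have := hinv _ (Finset.mem_singleton_self _)
    simp at this
  · -- not in the plain closure
    intro hC
    obtain ⟨H, hD, hmem⟩ := hC
    have hinv := botc_inv_derivNM hD (by
      intro τ hτ
      simp only [Finset.mem_singleton] at hτ
      subst hτ
      rfl)
    have := hinv _ hmem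
    simp at this
  · -- ρdf⊥¬ entailment
    intro I hM
    have hs := hM.simple1 _ (Finset.mem_singleton_self _) (fun h => h) (fun h => h)
    have hC := hM.disjI1 _ _ hs.2
    have hsc := (hM.disjII3 _ _ hC.1 hC.2).mp hs.2
    have hneg := hM.interp.hintneg bb nb
    have hbmem : Term.uri (URI.res bb nb) ∈ botVocT ∪
        uni ({⟨Term.uri (URI.res ba na), URI.botc, Term.uri (URI.res bb nb)⟩} : Graph) :=
      Set.mem_union_right _ ⟨_, Finset.mem_singleton_self _, Or.inr (Or.inr rfl)⟩
    refine { interp := ?_, simple1 := ?_, simple2 := ?_, simple3 := ?_, simple4 := ?_,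
             simple5 := ?_, sp_trans := hM.sp_trans, sp_sub := hM.sp_sub,
             sp_contra := hM.sp_contra, sc_trans := hM.sc_trans, sc_sub := hM.sc_sub,
             sc_contra := hM.sc_contra, typI1 := hM.typI1, typI2 := hM.typI2,
             typI3 := hM.typI3, typI4 := hM.typI4, typI5 := hM.typI5,
             typII1 := hM.typII1, typII2 := hM.typII2, typII3 := hM.typII3,
             typII4 := hM.typII4, disjI1 := hM.disjI1, disjI2 := hM.disjI2,
             disjI3_symm := hM.disjI3_symm, disjI3_subtrans := hM.disjI3_subtrans,
             disjI3_exh := hM.disjI3_exh, disjI4_symm := hM.disjI4_symm,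
             disjI4_subtrans := hM.disjI4_subtrans, disjI4_exh := hM.disjI4_exh,
             disjII1 := hM.disjII1, disjII2 := hM.disjII2, disjII3 := hM.disjII3,
             disjII4 := hM.disjII4 }
    · refine { hM.interp with hlit := ?_, hint := ?_ }
      · intro n hn
        exfalso
        simp [botVocT, botVoc, rhoVoc, uni] at hn
      · intro t ht hb hsr
        rcases ht with h | h
        · exact hM.interp.hint t (Set.mem_union_left _ h) hb hsr
        · simp only [uni, Finset.mem_singleton, Set.mem_setOf_eq] at h
          obtain ⟨τ, rfl, h⟩ := h
          rcases h with rfl | rfl | rfl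
          · exact hM.interp.hint _
              (Set.mem_union_right _ ⟨_, Finset.mem_singleton_self _, Or.inl rfl⟩) hb hsr
          · exact hM.interp.hint _
              (Set.mem_union_left _ ⟨URI.sc, by simp [botVoc, rhoVoc], rfl⟩) hb hsr
          · rw [hneg]
            have hb' := hM.interp.hint _ hbmem (fun h => h) (fun h => h)
            rcases hb' with h' | h'
            · exact Set.mem_union_left _ (hM.interp.complR _ h')
            · exact Set.mem_union_right _ (hM.interp.complP _ h')
    · intro τ hτ _ _
      simp only [Finset.mem_singleton] at hτ
      subst hτ
      refine ⟨hM.typII1 URI.sc (by simp [botVoc, rhoVoc]), ?_⟩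
      show (I.int (Term.uri (URI.res ba na)), I.int (Term.uri (URI.res (!bb) nb))) ∈ _
      rw [hneg]
      exact hsc
    · intro τ hτ b n h
      exfalso
      simp only [Finset.mem_singleton] at hτ
      subst hτ
      simp at h
    · intro τ hτ b n h
      exfalso
      simp only [Finset.mem_singleton] at hτ
      subst hτ
      simp at h
    · intro τ hτ b n h
      exfalso
      simp only [Finset.mem_singleton] at hτ
      subst hτ
      simp at h
    · intro τ hτ b n h
      exfalso
      simp only [Finset.mem_singleton] at hτ
      subst hτ
      simp at h
  · -- in the ρdf⊥¬ closure
    refine ⟨insert ⟨Term.uri (URI.res ba na), URI.sc, Term.uri (URI.res (!bb) nb)⟩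
        ({⟨Term.uri (URI.res ba na), URI.botc, Term.uri (URI.res bb nb)⟩} : Graph),
      Relation.ReflTransGen.single ?_, Finset.mem_insert_self _ _⟩
    exact StepNM.rule _ _ (Finset.Subset.refl _)
      (Or.inr (ExtraRule.botc_sc (Term.uri (URI.res ba na)) bb nb))
      (by simp [Triple.okN, Term.isBotVoc, Term.isStar, URI.isStar, botVoc, rhoVoc])


end Rho
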